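/- In the regular 7-gon inscribed in the unit circle with edge e_7 = 2·sin(π/7), the number x = (2·sin(π/7)·(1+sin(π/7)))/(1 + 2·sin(π/7) + sin(π/14)) satisfies the equation e_7 + ‖V_2 − (x,0)‖ = 2·e_7 + (1 − x), where V_2 = (cos(4π/7), sin(4π/7)). -/

import Mathlib

noncomputable def pt (x y : ℝ) : EuclideanSpace ℝ (Fin 2) := WithLp.toLp 2 ![x, y]

/-!
For a point `(c, y)` on the unit circle, `‖(c, y) − (x, 0)‖² = x² − 2cx + 1`, so once
`x ≤ e + 1` the equation `e + ‖(c, y) − (x, 0)‖ = 2e + (1 − x)` squares to an equation that is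
linear in `x`, with solution `x = e(e + 2) / (2(e + 1 − c))`. For `e = 2 sin(π/7)` and
`c = cos(4π/7) = −sin(π/14)` this is the stated value.
-/

open Real

lemma dist_pt_pt (a b c d : ℝ) : dist (pt a b) (pt c d) = √((a - c) ^ 2 + (b - d) ^ 2) := by
  simp [pt, EuclideanSpace.dist_eq, Fin.sum_univ_two, Real.dist_eq, sq_abs]

lemma dist_pt_pt_zero_of_sq_add_sq_eq_one {c y : ℝ} (hcy : c ^ 2 + y ^ 2 = 1) (x : ℝ) :
    dist (pt c y) (pt x 0) = √(x ^ 2 - 2 * c * x + 1) := by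
  rw [dist_pt_pt]
  congr 1
  linear_combination hcy

lemma add_dist_eq_two_mul_add_one_sub {c y e x : ℝ} (hcy : c ^ 2 + y ^ 2 = 1) (he : 0 < e)
    (hx : x = e * (e + 2) / (2 * (e + 1 - c))) :
    e + dist (pt c y) (pt x 0) = 2 * e + (1 - x) := by
  have hc : c ≤ 1 := by nlinarith
  have hden : 0 < e + 1 - c := by linarith
  have hxden : 2 * x * (e + 1 - c) = e * (e + 2) := by
    rw [hx]; field_simp
  have hx_le : x ≤ e + 1 := by
    rw [hx, div_le_iff₀ (by positivity)]
    nlinarith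
  have hsq : x ^ 2 - 2 * c * x + 1 = (e + 1 - x) ^ 2 := by linear_combination hxden
  rw [dist_pt_pt_zero_of_sq_add_sq_eq_one hcy, hsq, sqrt_sq (by linarith)]
  ring

lemma cos_four_mul_pi_div_seven : cos (4 * π / 7) = -sin (π / 14) := by
  rw [show 4 * π / 7 = π / 14 + π / 2 by ring, cos_add_pi_div_two]

/-- In the regular 7-gon inscribed in the unit circle with edge `e₇ = 2 sin(π/7)`, the
number `x = 2 sin(π/7)(1+sin(π/7)) / (1 + 2 sin(π/7) + sin(π/14))` satisfies
`e₇ + ‖V₂ − (x,0)‖ = 2e₇ + (1 − x)`, where `V₂ = (cos(4π/7), sin(4π/7))`. -/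
theorem heptagon_two_servants_eq :
    let e₇ : ℝ := 2 * Real.sin (Real.pi / 7)
    let x : ℝ := (2 * Real.sin (Real.pi / 7) * (1 + Real.sin (Real.pi / 7))) /
      (1 + 2 * Real.sin (Real.pi / 7) + Real.sin (Real.pi / 14))
    let V₂ := pt (Real.cos (4 * Real.pi / 7)) (Real.sin (4 * Real.pi / 7))
    e₇ + dist V₂ (pt x 0) = 2 * e₇ + (1 - x) := by
  intro e₇ x V₂
  have hs : 0 < sin (π / 7) := sin_pos_of_pos_of_lt_pi (by positivity) (by linarith [pi_pos])
  have ht : 0 < sin (π / 14) := sin_pos_of_pos_of_lt_pi (by positivity) (by linarith [pi_pos])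
  refine add_dist_eq_two_mul_add_one_sub (cos_sq_add_sin_sq _) (by positivity) ?_
  rw [cos_four_mul_pi_div_seven]
  field_simp
  ring
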